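/- arXiv:1705.04315 — 5 statements merged into one kernel-verified Lean document; each statement's English description precedes it below -/
import Mathlib

section
/- Let A = (a_{ijklpq}) ∈ T_{6,3} be paired symmetric. Then A has at least one M-eigenvalue, i.e., there exist λ ∈ ℝ and x, y, z ∈ ℝ³ forming an M-eigenpair of A. Moreover, if λ ∈ ℝ is any M-eigenvalue of A with eigenvectors x, y, z, then λ = A x²y²z². -/
open scoped BigOperators

/-- A sixth order three dimensional tensor. -/
abbrev Tensor6 := Fin 3 → Fin 3 → Fin 3 → Fin 3 → Fin 3 → Fin 3 → ℝ

/-- The homogeneous polynomial `A x²y²z²`. -/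
def hexForm (A : Tensor6) (x y z : Fin 3 → ℝ) : ℝ :=
  ∑ i, ∑ j, ∑ k, ∑ l, ∑ p, ∑ q,
    A i j k l p q * x i * x j * y k * y l * z p * z q

/-- `A` is paired symmetric. -/
def PairedSym6 (A : Tensor6) : Prop :=
  ∀ i j k l p q : Fin 3,
    A i j k l p q = A j i k l p q ∧
    A i j k l p q = A i j l k p q ∧
    A i j k l p q = A i j k l q p

/-- `lam` is an M-eigenvalue of `A` with eigenvectors `x, y, z`. -/
def MEig6 (A : Tensor6) (lam : ℝ) (x y z : Fin 3 → ℝ) : Prop :=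
  (∑ i, x i * x i) = 1 ∧ (∑ i, y i * y i) = 1 ∧ (∑ i, z i * z i) = 1 ∧
  (∀ i, (∑ j, ∑ k, ∑ l, ∑ p, ∑ q,
      A i j k l p q * x j * y k * y l * z p * z q) = lam * x i) ∧
  (∀ k, (∑ i, ∑ j, ∑ l, ∑ p, ∑ q,
      A i j k l p q * x i * x j * y l * z p * z q) = lam * y k) ∧
  (∀ p, (∑ i, ∑ j, ∑ k, ∑ l, ∑ q,
      A i j k l p q * x i * x j * y k * y l * z q) = lam * z p)

/-! The form `A x²y²z²` is continuous, so it attains its maximum `λ` on the product of three unit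
spheres, say at `(x, y, z)`. Freezing two of the variables turns it into a quadratic form
`u ↦ u ⬝ᵥ M *ᵥ u` whose matrix `M` is symmetric by paired symmetry, and which is maximal on the
unit sphere at the third variable. Then `λ • 1 - M` is positive semidefinite and its quadratic
form vanishes at that point, so the point lies in its kernel: it is an eigenvector of `M` for `λ`,
which is exactly one of the three M-eigen-equations. Conversely, contracting the first
eigen-equation with `x` gives `λ = A x²y²z²`. -/

open Matrix

section Rayleigh

variable {n : Type*} [Fintype n]

theorem isCompact_setOf_dotProduct_self_eq_one : IsCompact {u : n → ℝ | u ⬝ᵥ u = 1} := by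
  refine Metric.isCompact_of_isClosed_isBounded
    (isClosed_eq (continuous_id.dotProduct continuous_id) continuous_const) ?_
  refine (Metric.isBounded_closedBall (x := 0) (r := 1)).subset fun u hu => ?_
  rw [Metric.mem_closedBall, dist_zero_right, pi_norm_le_iff_of_nonneg zero_le_one]
  intro i
  rw [Real.norm_eq_abs, abs_le_one_iff_mul_self_le_one, ← (Set.mem_ofPred.1 hu)]
  exact Finset.single_le_sum (fun j _ => mul_self_nonneg (u j)) (Finset.mem_univ i)

theorem dotProduct_mulVec_le_of_isMaxOn {M : Matrix n n ℝ} {x : n → ℝ}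
    (hmax : IsMaxOn (fun u => u ⬝ᵥ M *ᵥ u) {u | u ⬝ᵥ u = 1} x) (u : n → ℝ) :
    u ⬝ᵥ M *ᵥ u ≤ (x ⬝ᵥ M *ᵥ x) * (u ⬝ᵥ u) := by
  have hu : 0 ≤ u ⬝ᵥ u := Finset.sum_nonneg fun i _ => mul_self_nonneg (u i)
  rcases hu.eq_or_lt with h0 | hpos
  · simp [dotProduct_self_eq_zero.1 h0.symm]
  · set r := √(u ⬝ᵥ u)
    have hr : 0 < r := Real.sqrt_pos.2 hpos
    have hr2 : r ^ 2 = u ⬝ᵥ u := Real.sq_sqrt hpos.le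
    have h := isMaxOn_iff.1 hmax (r⁻¹ • u) (by
      simp only [Set.mem_ofPred, smul_dotProduct, dotProduct_smul, smul_eq_mul, ← hr2]
      field_simp)
    simp only [mulVec_smul, smul_dotProduct, dotProduct_smul, smul_eq_mul] at h
    rw [← hr2]
    field_simp at h
    linarith

theorem Matrix.IsSymm.mulVec_eq_smul_of_isMaxOn {M : Matrix n n ℝ} (hM : M.IsSymm)
    {x : n → ℝ} (hx : x ⬝ᵥ x = 1)
    (hmax : IsMaxOn (fun u => u ⬝ᵥ M *ᵥ u) {u | u ⬝ᵥ u = 1} x) :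
    M *ᵥ x = (x ⬝ᵥ M *ᵥ x) • x := by
  classical
  set c := x ⬝ᵥ M *ᵥ x
  have hN : (c • 1 - M).PosSemidef := by
    refine .of_dotProduct_mulVec_nonneg ?_ fun u => ?_
    · exact isHermitian_iff_isSymm.2 ((isSymm_one.smul c).sub hM)
    · simp only [star_trivial, sub_mulVec, smul_mulVec, one_mulVec, dotProduct_sub,
        dotProduct_smul, smul_eq_mul]
      linarith [dotProduct_mulVec_le_of_isMaxOn hmax u]
  have hNx := (hN.dotProduct_mulVec_zero_iff x).1 (by
    simp only [star_trivial, sub_mulVec, smul_mulVec, one_mulVec, dotProduct_sub,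
        dotProduct_smul, smul_eq_mul, hx, c]; ring)
  rw [sub_mulVec, smul_mulVec, one_mulVec, sub_eq_zero] at hNx
  exact hNx.symm

end Rayleigh

theorem Finset.sum_comm_pairs {α β γ δ M : Type*} [AddCommMonoid M] {s : Finset α} {t : Finset β}
    {u : Finset γ} {v : Finset δ} (f : α → β → γ → δ → M) :
    ∑ a ∈ s, ∑ b ∈ t, ∑ c ∈ u, ∑ d ∈ v, f a b c d
      = ∑ c ∈ u, ∑ d ∈ v, ∑ a ∈ s, ∑ b ∈ t, f a b c d :=
  Finset.sum_comm_cycle.trans (Finset.sum_congr rfl fun _ _ => Finset.sum_comm_cycle)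

theorem Finset.sum_comm_cycle_five {α β γ δ ε M : Type*} [AddCommMonoid M] {s : Finset α}
    {t : Finset β} {u : Finset γ} {v : Finset δ} {w : Finset ε} (f : α → β → γ → δ → ε → M) :
    ∑ a ∈ s, ∑ b ∈ t, ∑ c ∈ u, ∑ d ∈ v, ∑ e ∈ w, f a b c d e
      = ∑ e ∈ w, ∑ a ∈ s, ∑ b ∈ t, ∑ c ∈ u, ∑ d ∈ v, f a b c d e :=
  (Finset.sum_congr rfl fun _ _ => Finset.sum_congr rfl fun _ _ => Finset.sum_comm_cycle).trans
    Finset.sum_comm_cycle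

section Slices

variable (A : Tensor6)

def sliceX (y z : Fin 3 → ℝ) : Matrix (Fin 3) (Fin 3) ℝ :=
  of fun i j => ∑ k, ∑ l, ∑ p, ∑ q, A i j k l p q * y k * y l * z p * z q

def sliceY (x z : Fin 3 → ℝ) : Matrix (Fin 3) (Fin 3) ℝ :=
  of fun k l => ∑ i, ∑ j, ∑ p, ∑ q, A i j k l p q * x i * x j * z p * z q

def sliceZ (x y : Fin 3 → ℝ) : Matrix (Fin 3) (Fin 3) ℝ :=
  of fun p q => ∑ i, ∑ j, ∑ k, ∑ l, A i j k l p q * x i * x j * y k * y l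

variable (x y z : Fin 3 → ℝ)

theorem hexForm_eq_dotProduct_sliceX : hexForm A x y z = x ⬝ᵥ sliceX A y z *ᵥ x := by
  simp only [hexForm, sliceX, dotProduct, mulVec, of_apply, Finset.mul_sum, Finset.sum_mul]
  simp only [mul_comm, mul_left_comm]

theorem hexForm_eq_dotProduct_sliceY : hexForm A x y z = y ⬝ᵥ sliceY A x z *ᵥ y := by
  rw [hexForm, Finset.sum_comm_pairs]
  simp only [sliceY, dotProduct, mulVec, of_apply, Finset.mul_sum, Finset.sum_mul]
  simp only [mul_comm, mul_left_comm]

theorem hexForm_eq_dotProduct_sliceZ : hexForm A x y z = z ⬝ᵥ sliceZ A x y *ᵥ z := by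
  rw [hexForm, Finset.sum_comm_cycle_five]
  simp only [sliceZ, dotProduct, mulVec, of_apply, Finset.mul_sum, Finset.sum_mul]
  refine Finset.sum_congr rfl fun p _ => ?_
  rw [Finset.sum_comm_cycle_five]
  simp only [mul_comm, mul_left_comm]

theorem sliceX_mulVec_apply (i : Fin 3) : (sliceX A y z *ᵥ x) i =
    ∑ j, ∑ k, ∑ l, ∑ p, ∑ q, A i j k l p q * x j * y k * y l * z p * z q := by
  simp only [sliceX, mulVec, dotProduct, of_apply, Finset.sum_mul]
  simp only [mul_comm, mul_left_comm]

theorem sliceY_mulVec_apply (k : Fin 3) : (sliceY A x z *ᵥ y) k =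
    ∑ i, ∑ j, ∑ l, ∑ p, ∑ q, A i j k l p q * x i * x j * y l * z p * z q := by
  rw [Finset.sum_comm_cycle]
  simp only [sliceY, mulVec, dotProduct, of_apply, Finset.sum_mul]
  simp only [mul_comm, mul_left_comm]

theorem sliceZ_mulVec_apply (p : Fin 3) : (sliceZ A x y *ᵥ z) p =
    ∑ i, ∑ j, ∑ k, ∑ l, ∑ q, A i j k l p q * x i * x j * y k * y l * z q := by
  rw [Finset.sum_comm_cycle_five]
  simp only [sliceZ, mulVec, dotProduct, of_apply, Finset.sum_mul]

variable {A} in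
theorem mEig6_iff {lam : ℝ} : MEig6 A lam x y z ↔
    x ⬝ᵥ x = 1 ∧ y ⬝ᵥ y = 1 ∧ z ⬝ᵥ z = 1 ∧ sliceX A y z *ᵥ x = lam • x ∧
      sliceY A x z *ᵥ y = lam • y ∧ sliceZ A x y *ᵥ z = lam • z := by
  simp only [MEig6, funext_iff, Pi.smul_apply, smul_eq_mul, sliceX_mulVec_apply,
    sliceY_mulVec_apply, sliceZ_mulVec_apply]
  rfl

end Slices

section PairedSym6

variable {A : Tensor6}

theorem PairedSym6.isSymm_sliceX (hA : PairedSym6 A) (y z : Fin 3 → ℝ) :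
    (sliceX A y z).IsSymm :=
  IsSymm.ext fun i j => by simp only [sliceX, of_apply, (hA i j _ _ _ _).1]

theorem PairedSym6.isSymm_sliceY (hA : PairedSym6 A) (x z : Fin 3 → ℝ) :
    (sliceY A x z).IsSymm :=
  IsSymm.ext fun k l => by simp only [sliceY, of_apply, (hA _ _ k l _ _).2.1]

theorem PairedSym6.isSymm_sliceZ (hA : PairedSym6 A) (x y : Fin 3 → ℝ) :
    (sliceZ A x y).IsSymm :=
  IsSymm.ext fun p q => by simp only [sliceZ, of_apply, (hA _ _ _ _ p q).2.2]

end PairedSym6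

theorem exists_forall_hexForm_le (A : Tensor6) : ∃ x y z : Fin 3 → ℝ,
    x ⬝ᵥ x = 1 ∧ y ⬝ᵥ y = 1 ∧ z ⬝ᵥ z = 1 ∧ ∀ u v w : Fin 3 → ℝ,
      u ⬝ᵥ u = 1 → v ⬝ᵥ v = 1 → w ⬝ᵥ w = 1 → hexForm A u v w ≤ hexForm A x y z := by
  set S := {u : Fin 3 → ℝ | u ⬝ᵥ u = 1}
  have hS : IsCompact S := isCompact_setOf_dotProduct_self_eq_one
  have hS₀ : Pi.single 0 1 ∈ S := by simp [S]
  obtain ⟨⟨x, y, z⟩, ⟨hx, hy, hz⟩, hmax⟩ := (hS.prod (hS.prod hS)).exists_isMaxOn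
    ⟨(Pi.single 0 1, Pi.single 0 1, Pi.single 0 1), hS₀, hS₀, hS₀⟩
    (f := fun w => hexForm A w.1 w.2.1 w.2.2) (by unfold hexForm; fun_prop)
  exact ⟨x, y, z, hx, hy, hz, fun u v w hu hv hw => isMaxOn_iff.1 hmax (u, v, w) ⟨hu, hv, hw⟩⟩

theorem stmt_3 (A : Tensor6) (hA : PairedSym6 A) :
    (∃ (lam : ℝ) (x y z : Fin 3 → ℝ), MEig6 A lam x y z) ∧
    (∀ (lam : ℝ) (x y z : Fin 3 → ℝ), MEig6 A lam x y z → lam = hexForm A x y z) := by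
  refine ⟨?_, fun lam x y z h => ?_⟩
  · obtain ⟨x, y, z, hx, hy, hz, hmax⟩ := exists_forall_hexForm_le A
    refine ⟨hexForm A x y z, x, y, z, (mEig6_iff x y z).2 ⟨hx, hy, hz, ?_, ?_, ?_⟩⟩
    · rw [hexForm_eq_dotProduct_sliceX]
      refine (hA.isSymm_sliceX y z).mulVec_eq_smul_of_isMaxOn hx (isMaxOn_iff.2 fun u hu => ?_)
      simpa only [hexForm_eq_dotProduct_sliceX] using hmax u y z hu hy hz
    · rw [hexForm_eq_dotProduct_sliceY]
      refine (hA.isSymm_sliceY x z).mulVec_eq_smul_of_isMaxOn hy (isMaxOn_iff.2 fun u hu => ?_)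
      simpa only [hexForm_eq_dotProduct_sliceY] using hmax x u z hx hu hz
    · rw [hexForm_eq_dotProduct_sliceZ]
      refine (hA.isSymm_sliceZ x y).mulVec_eq_smul_of_isMaxOn hz (isMaxOn_iff.2 fun u hu => ?_)
      simpa only [hexForm_eq_dotProduct_sliceZ] using hmax x y u hx hy hu
  · obtain ⟨hx, -, -, hxEig, -, -⟩ := (mEig6_iff x y z).1 h
    rw [hexForm_eq_dotProduct_sliceX, hxEig, dotProduct_smul, hx, smul_eq_mul, mul_one]
end

section
/- Let A = (a_{ijklpq}) ∈ T_{6,3} be paired symmetric. Then A is positive definite (i.e., A x²y²z² > 0 for all nonzero x, y, z ∈ ℝ³) if and only if every M-eigenvalue of A is positive. -/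
open scoped BigOperators

/- ### Auxiliary lemmas -/

lemma key_a (a b : ℝ) (h : ∀ t : ℝ, 0 ≤ 2*t*a + t^2*b) : a = 0 := by
  by_contra ha
  have hc : (0:ℝ) < |b| + 1 := by positivity
  have h1 := h (-a / (|b| + 1))
  have hb : b ≤ |b| := le_abs_self b
  have ha2 : (0:ℝ) < a^2 := by positivity
  have key : 2*(-a / (|b| + 1))*a + (-a / (|b| + 1))^2*b
      = a^2/(|b|+1)^2 * (b - 2*(|b|+1)) := by field_simp; ring
  rw [key] at h1
  nlinarith [mul_pos ha2 hc, sq_nonneg (|b|+1),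
    mul_pos (div_pos ha2 (by positivity : (0:ℝ) < (|b|+1)^2)) hc]

lemma fin3_mk2 : (⟨2, by omega⟩ : Fin 3) = 2 := rfl
lemma fin3_mk1 : (⟨1, by omega⟩ : Fin 3) = 1 := rfl
lemma fin3_mk0 : (⟨0, by omega⟩ : Fin 3) = 0 := rfl

lemma eig_of_min (B : Fin 3 → Fin 3 → ℝ) (hsym : ∀ i j, B i j = B j i) (lam : ℝ)
    (x : Fin 3 → ℝ)
    (hQ : (∑ i, ∑ j, B i j * x i * x j) = lam)
    (hmin : ∀ w : Fin 3 → ℝ, lam * (∑ i, w i * w i) ≤ ∑ i, ∑ j, B i j * w i * w j)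
    (hx : (∑ i, x i * x i) = 1) :
    ∀ i, (∑ j, B i j * x j) = lam * x i := by
  intro i
  have hlx : lam * (x 0 * x 0 + x 1 * x 1 + x 2 * x 2) = lam * 1 := by
    rw [show x 0 * x 0 + x 1 * x 1 + x 2 * x 2 = 1 by
      simpa [Fin.sum_univ_three] using hx]
  have key : ∀ t : ℝ, 0 ≤ 2*t*((∑ j, B i j * x j) - lam * x i) + t^2*(B i i - lam) := by
    intro t
    have h := hmin (fun j => x j + t * (if j = i then 1 else 0))
    simp only [Fin.sum_univ_three] at h hQ ⊢
    fin_cases i <;>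
      simp only [fin3_mk0, fin3_mk1, fin3_mk2] at h ⊢ <;>
      simp only [hsym 1 0, hsym 2 0, hsym 2 1] at h hQ ⊢ <;>
      norm_num [Fin.ext_iff] at h ⊢ <;>
      nlinarith [h, hQ, hlx]
  have := key_a _ _ key
  linarith

set_option maxHeartbeats 1000000 in
lemma hexQx (A : Tensor6) (x y z : Fin 3 → ℝ) :
    hexForm A x y z
      = ∑ i, ∑ j, (∑ k, ∑ l, ∑ p, ∑ q,
          A i j k l p q * y k * y l * z p * z q) * x i * x j := by
  simp only [hexForm, Finset.sum_mul]
  refine Finset.sum_congr rfl fun _ _ => Finset.sum_congr rfl fun _ _ =>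
    Finset.sum_congr rfl fun _ _ => Finset.sum_congr rfl fun _ _ =>
    Finset.sum_congr rfl fun _ _ => Finset.sum_congr rfl fun _ _ => ?_
  ring

set_option maxHeartbeats 1000000 in
lemma hexQy (A : Tensor6) (x y z : Fin 3 → ℝ) :
    hexForm A x y z
      = ∑ k, ∑ l, (∑ i, ∑ j, ∑ p, ∑ q,
          A i j k l p q * x i * x j * z p * z q) * y k * y l := by
  simp only [hexForm, Fin.sum_univ_three]; ring

set_option maxHeartbeats 1000000 in
lemma hexQz (A : Tensor6) (x y z : Fin 3 → ℝ) :
    hexForm A x y z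
      = ∑ p, ∑ q, (∑ i, ∑ j, ∑ k, ∑ l,
          A i j k l p q * x i * x j * y k * y l) * z p * z q := by
  simp only [hexForm, Fin.sum_univ_three]; ring

set_option maxHeartbeats 1000000 in
lemma hexI (A : Tensor6) (x y z : Fin 3 → ℝ) :
    hexForm A x y z
      = ∑ i, (∑ j, ∑ k, ∑ l, ∑ p, ∑ q,
          A i j k l p q * x j * y k * y l * z p * z q) * x i := by
  simp only [hexForm, Finset.sum_mul]
  refine Finset.sum_congr rfl fun _ _ => Finset.sum_congr rfl fun _ _ =>
    Finset.sum_congr rfl fun _ _ => Finset.sum_congr rfl fun _ _ =>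
    Finset.sum_congr rfl fun _ _ => Finset.sum_congr rfl fun _ _ => ?_
  ring

set_option maxHeartbeats 1000000 in
lemma fmtx (A : Tensor6) (x y z : Fin 3 → ℝ) (i : Fin 3) :
    (∑ j, ∑ k, ∑ l, ∑ p, ∑ q, A i j k l p q * x j * y k * y l * z p * z q)
      = ∑ j, (∑ k, ∑ l, ∑ p, ∑ q, A i j k l p q * y k * y l * z p * z q) * x j := by
  simp only [Fin.sum_univ_three]; ring

set_option maxHeartbeats 1000000 in
lemma fmty (A : Tensor6) (x y z : Fin 3 → ℝ) (k : Fin 3) :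
    (∑ i, ∑ j, ∑ l, ∑ p, ∑ q, A i j k l p q * x i * x j * y l * z p * z q)
      = ∑ l, (∑ i, ∑ j, ∑ p, ∑ q, A i j k l p q * x i * x j * z p * z q) * y l := by
  simp only [Fin.sum_univ_three]; ring

set_option maxHeartbeats 1000000 in
lemma fmtz (A : Tensor6) (x y z : Fin 3 → ℝ) (p : Fin 3) :
    (∑ i, ∑ j, ∑ k, ∑ l, ∑ q, A i j k l p q * x i * x j * y k * y l * z q)
      = ∑ q, (∑ i, ∑ j, ∑ k, ∑ l, A i j k l p q * x i * x j * y k * y l) * z q := by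
  simp only [Fin.sum_univ_three]; ring

set_option maxHeartbeats 1000000 in
lemma hex_smul_x (A : Tensor6) (x y z : Fin 3 → ℝ) (c : ℝ) :
    hexForm A (c • x) y z = c^2 * hexForm A x y z := by
  simp only [hexForm, Pi.smul_apply, smul_eq_mul, Finset.mul_sum]
  refine Finset.sum_congr rfl fun _ _ => Finset.sum_congr rfl fun _ _ =>
    Finset.sum_congr rfl fun _ _ => Finset.sum_congr rfl fun _ _ =>
    Finset.sum_congr rfl fun _ _ => Finset.sum_congr rfl fun _ _ => ?_
  ring

set_option maxHeartbeats 1000000 in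
lemma hex_smul_y (A : Tensor6) (x y z : Fin 3 → ℝ) (c : ℝ) :
    hexForm A x (c • y) z = c^2 * hexForm A x y z := by
  simp only [hexForm, Pi.smul_apply, smul_eq_mul, Finset.mul_sum]
  refine Finset.sum_congr rfl fun _ _ => Finset.sum_congr rfl fun _ _ =>
    Finset.sum_congr rfl fun _ _ => Finset.sum_congr rfl fun _ _ =>
    Finset.sum_congr rfl fun _ _ => Finset.sum_congr rfl fun _ _ => ?_
  ring

set_option maxHeartbeats 1000000 in
lemma hex_smul_z (A : Tensor6) (x y z : Fin 3 → ℝ) (c : ℝ) :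
    hexForm A x y (c • z) = c^2 * hexForm A x y z := by
  simp only [hexForm, Pi.smul_apply, smul_eq_mul, Finset.mul_sum]
  refine Finset.sum_congr rfl fun _ _ => Finset.sum_congr rfl fun _ _ =>
    Finset.sum_congr rfl fun _ _ => Finset.sum_congr rfl fun _ _ =>
    Finset.sum_congr rfl fun _ _ => Finset.sum_congr rfl fun _ _ => ?_
  ring

lemma sumsq_smul (c : ℝ) (u : Fin 3 → ℝ) :
    (∑ i, (c • u) i * (c • u) i) = c^2 * ∑ i, u i * u i := by
  simp only [Fin.sum_univ_three, Pi.smul_apply, smul_eq_mul]; ring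

lemma decomp (v : Fin 3 → ℝ) (hv : v ≠ 0) :
    ∃ (c : ℝ) (u : Fin 3 → ℝ), 0 < c ∧ ((∑ i, u i * u i) = 1) ∧ v = c • u := by
  have hs : 0 < ∑ i, v i * v i := by
    have hex : ∃ i, v i ≠ 0 := by
      by_contra hc; push_neg at hc; exact hv (funext hc)
    obtain ⟨i, hi⟩ := hex
    exact lt_of_lt_of_le (mul_self_pos.mpr hi)
      (Finset.single_le_sum (fun j _ => mul_self_nonneg (v j)) (Finset.mem_univ i))
  set s := ∑ i, v i * v i with hsdef
  have hc : 0 < Real.sqrt s := Real.sqrt_pos.mpr hs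
  refine ⟨Real.sqrt s, (Real.sqrt s)⁻¹ • v, hc, ?_, ?_⟩
  · rw [sumsq_smul, inv_pow, Real.sq_sqrt hs.le, ← hsdef, inv_mul_cancel₀ hs.ne']
  · rw [smul_inv_smul₀ hc.ne']

lemma hex_zero_x (A : Tensor6) (y z : Fin 3 → ℝ) : hexForm A 0 y z = 0 := by
  simp [hexForm]

lemma hex_zero_y (A : Tensor6) (x z : Fin 3 → ℝ) : hexForm A x 0 z = 0 := by
  simp [hexForm]

lemma hex_zero_z (A : Tensor6) (x y : Fin 3 → ℝ) : hexForm A x y 0 = 0 := by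
  simp [hexForm]

lemma sphere_compact : IsCompact {v : Fin 3 → ℝ | (∑ i, v i * v i) = 1} := by
  apply Metric.isCompact_of_isClosed_isBounded
  · exact isClosed_eq (by fun_prop) continuous_const
  · apply Bornology.IsBounded.subset
      (Metric.isBounded_closedBall (x := (0 : Fin 3 → ℝ)) (r := 1))
    intro v hv
    simp only [Metric.mem_closedBall, dist_zero_right]
    rw [pi_norm_le_iff_of_nonneg (by norm_num)]
    intro i
    rw [Real.norm_eq_abs, abs_le_one_iff_mul_self_le_one]
    calc v i * v i ≤ ∑ j, v j * v j :=
          Finset.single_le_sum (fun j _ => mul_self_nonneg (v j)) (Finset.mem_univ i)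
    _ = 1 := hv

set_option maxHeartbeats 1000000 in
theorem stmt_4 (A : Tensor6) (hA : PairedSym6 A) :
    (∀ x y z : Fin 3 → ℝ, x ≠ 0 → y ≠ 0 → z ≠ 0 → 0 < hexForm A x y z) ↔
    (∀ (lam : ℝ) (x y z : Fin 3 → ℝ), MEig6 A lam x y z → 0 < lam) := by
  constructor
  · -- positive definite → all M-eigenvalues positive
    rintro hpos lam x y z ⟨hx, hy, hz, hex, -, -⟩
    have hxne : x ≠ 0 := by rintro rfl; simp at hx
    have hyne : y ≠ 0 := by rintro rfl; simp at hy
    have hzne : z ≠ 0 := by rintro rfl; simp at hz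
    have hval : hexForm A x y z = lam := by
      rw [hexI]
      calc (∑ i, (∑ j, ∑ k, ∑ l, ∑ p, ∑ q,
              A i j k l p q * x j * y k * y l * z p * z q) * x i)
          = ∑ i, (lam * x i) * x i :=
            Finset.sum_congr rfl fun i _ => by rw [hex i]
        _ = lam * ∑ i, x i * x i := by
            rw [Finset.mul_sum]; exact Finset.sum_congr rfl fun i _ => by ring
        _ = lam := by rw [hx, mul_one]
    have := hpos x y z hxne hyne hzne
    linarith [hval ▸ this]
  · -- all M-eigenvalues positive → positive definite
    intro heig x y z hxne hyne hzne
    set S : Set (Fin 3 → ℝ) := {v | (∑ i, v i * v i) = 1} with hSdef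
    have hScpt : IsCompact S := sphere_compact
    set T : Set ((Fin 3 → ℝ) × (Fin 3 → ℝ) × (Fin 3 → ℝ)) := S ×ˢ S ×ˢ S with hTdef
    have hTcpt : IsCompact T := hScpt.prod (hScpt.prod hScpt)
    obtain ⟨cx, ux, hcx, hux, hxdec⟩ := decomp x hxne
    obtain ⟨cy, uy, hcy, huy, hydec⟩ := decomp y hyne
    obtain ⟨cz, uz, hcz, huz, hzdec⟩ := decomp z hzne
    have hTne : ((ux, uy, uz) : (Fin 3 → ℝ) × (Fin 3 → ℝ) × (Fin 3 → ℝ)) ∈ T :=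
      ⟨hux, huy, huz⟩
    have hfc : Continuous fun v : (Fin 3 → ℝ) × (Fin 3 → ℝ) × (Fin 3 → ℝ) =>
        hexForm A v.1 v.2.1 v.2.2 := by
      unfold hexForm; fun_prop
    obtain ⟨m, hmT, hmin⟩ :=
      hTcpt.exists_isMinOn ⟨(ux, uy, uz), hTne⟩ hfc.continuousOn
    obtain ⟨x₀, y₀, z₀⟩ := m
    obtain ⟨hx₀, hy₀, hz₀⟩ := hmT
    obtain ⟨lam, hlam⟩ : ∃ l, hexForm A x₀ y₀ z₀ = l := ⟨_, rfl⟩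
    have hminT : ∀ u v w : Fin 3 → ℝ, (∑ i, u i * u i) = 1 → (∑ i, v i * v i) = 1 →
        (∑ i, w i * w i) = 1 → lam ≤ hexForm A u v w := by
      intro u v w hu hv hw
      rw [← hlam]
      exact isMinOn_iff.1 hmin (u, v, w) ⟨hu, hv, hw⟩
    have hminx : ∀ w : Fin 3 → ℝ, lam * (∑ i, w i * w i) ≤ hexForm A w y₀ z₀ := by
      intro w
      by_cases hw : w = 0
      · subst hw
        rw [hex_zero_x, show (∑ i, (0:Fin 3 → ℝ) i * (0:Fin 3 → ℝ) i) = 0 by simp,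
          mul_zero]
      · obtain ⟨c, u, hc, hu, rfl⟩ := decomp w hw
        rw [hex_smul_x, sumsq_smul, hu, mul_one]
        calc lam * c^2 ≤ (hexForm A u y₀ z₀) * c^2 := by
              have := hminT u y₀ z₀ hu hy₀ hz₀
              nlinarith [sq_nonneg c]
          _ = c^2 * hexForm A u y₀ z₀ := by ring
    have hminy : ∀ w : Fin 3 → ℝ, lam * (∑ i, w i * w i) ≤ hexForm A x₀ w z₀ := by
      intro w
      by_cases hw : w = 0
      · subst hw
        rw [hex_zero_y, show (∑ i, (0:Fin 3 → ℝ) i * (0:Fin 3 → ℝ) i) = 0 by simp,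
          mul_zero]
      · obtain ⟨c, u, hc, hu, rfl⟩ := decomp w hw
        rw [hex_smul_y, sumsq_smul, hu, mul_one]
        calc lam * c^2 ≤ (hexForm A x₀ u z₀) * c^2 := by
              have := hminT x₀ u z₀ hx₀ hu hz₀
              nlinarith [sq_nonneg c]
          _ = c^2 * hexForm A x₀ u z₀ := by ring
    have hminz : ∀ w : Fin 3 → ℝ, lam * (∑ i, w i * w i) ≤ hexForm A x₀ y₀ w := by
      intro w
      by_cases hw : w = 0
      · subst hw
        rw [hex_zero_z, show (∑ i, (0:Fin 3 → ℝ) i * (0:Fin 3 → ℝ) i) = 0 by simp,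
          mul_zero]
      · obtain ⟨c, u, hc, hu, rfl⟩ := decomp w hw
        rw [hex_smul_z, sumsq_smul, hu, mul_one]
        calc lam * c^2 ≤ (hexForm A x₀ y₀ u) * c^2 := by
              have := hminT x₀ y₀ u hx₀ hy₀ hu
              nlinarith [sq_nonneg c]
          _ = c^2 * hexForm A x₀ y₀ u := by ring
    have heigx : ∀ i, (∑ j, ∑ k, ∑ l, ∑ p, ∑ q,
        A i j k l p q * x₀ j * y₀ k * y₀ l * z₀ p * z₀ q) = lam * x₀ i := by
      have hsymB : ∀ i j, (∑ k, ∑ l, ∑ p, ∑ q, A i j k l p q * y₀ k * y₀ l * z₀ p * z₀ q)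
          = ∑ k, ∑ l, ∑ p, ∑ q, A j i k l p q * y₀ k * y₀ l * z₀ p * z₀ q := by
        intro i j
        refine Finset.sum_congr rfl fun k _ => Finset.sum_congr rfl fun l _ =>
          Finset.sum_congr rfl fun p _ => Finset.sum_congr rfl fun q _ => ?_
        rw [(hA i j k l p q).1]
      have hQ : (∑ i, ∑ j, (∑ k, ∑ l, ∑ p, ∑ q,
          A i j k l p q * y₀ k * y₀ l * z₀ p * z₀ q) * x₀ i * x₀ j) = lam := by
        rw [← hexQx, hlam]
      have hm : ∀ w : Fin 3 → ℝ, lam * (∑ i, w i * w i) ≤ ∑ i, ∑ j, (∑ k, ∑ l, ∑ p, ∑ q,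
          A i j k l p q * y₀ k * y₀ l * z₀ p * z₀ q) * w i * w j := by
        intro w; rw [← hexQx]; exact hminx w
      have := eig_of_min
        (fun i j => ∑ k, ∑ l, ∑ p, ∑ q, A i j k l p q * y₀ k * y₀ l * z₀ p * z₀ q)
        hsymB lam x₀ hQ hm hx₀
      intro i
      rw [fmtx]
      exact this i
    have heigy : ∀ k, (∑ i, ∑ j, ∑ l, ∑ p, ∑ q,
        A i j k l p q * x₀ i * x₀ j * y₀ l * z₀ p * z₀ q) = lam * y₀ k := by
      have hsymB : ∀ k l, (∑ i, ∑ j, ∑ p, ∑ q, A i j k l p q * x₀ i * x₀ j * z₀ p * z₀ q)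
          = ∑ i, ∑ j, ∑ p, ∑ q, A i j l k p q * x₀ i * x₀ j * z₀ p * z₀ q := by
        intro k l
        refine Finset.sum_congr rfl fun i _ => Finset.sum_congr rfl fun j _ =>
          Finset.sum_congr rfl fun p _ => Finset.sum_congr rfl fun q _ => ?_
        rw [(hA i j k l p q).2.1]
      have hQ : (∑ k, ∑ l, (∑ i, ∑ j, ∑ p, ∑ q,
          A i j k l p q * x₀ i * x₀ j * z₀ p * z₀ q) * y₀ k * y₀ l) = lam := by
        rw [← hexQy, hlam]
      have hm : ∀ w : Fin 3 → ℝ, lam * (∑ k, w k * w k) ≤ ∑ k, ∑ l, (∑ i, ∑ j, ∑ p, ∑ q,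
          A i j k l p q * x₀ i * x₀ j * z₀ p * z₀ q) * w k * w l := by
        intro w; rw [← hexQy]; exact hminy w
      have := eig_of_min
        (fun k l => ∑ i, ∑ j, ∑ p, ∑ q, A i j k l p q * x₀ i * x₀ j * z₀ p * z₀ q)
        hsymB lam y₀ hQ hm hy₀
      intro k
      rw [fmty]
      exact this k
    have heigz : ∀ p, (∑ i, ∑ j, ∑ k, ∑ l, ∑ q,
        A i j k l p q * x₀ i * x₀ j * y₀ k * y₀ l * z₀ q) = lam * z₀ p := by
      have hsymB : ∀ p q, (∑ i, ∑ j, ∑ k, ∑ l, A i j k l p q * x₀ i * x₀ j * y₀ k * y₀ l)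
          = ∑ i, ∑ j, ∑ k, ∑ l, A i j k l q p * x₀ i * x₀ j * y₀ k * y₀ l := by
        intro p q
        refine Finset.sum_congr rfl fun i _ => Finset.sum_congr rfl fun j _ =>
          Finset.sum_congr rfl fun k _ => Finset.sum_congr rfl fun l _ => ?_
        rw [(hA i j k l p q).2.2]
      have hQ : (∑ p, ∑ q, (∑ i, ∑ j, ∑ k, ∑ l,
          A i j k l p q * x₀ i * x₀ j * y₀ k * y₀ l) * z₀ p * z₀ q) = lam := by
        rw [← hexQz, hlam]
      have hm : ∀ w : Fin 3 → ℝ, lam * (∑ p, w p * w p) ≤ ∑ p, ∑ q, (∑ i, ∑ j, ∑ k, ∑ l,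
          A i j k l p q * x₀ i * x₀ j * y₀ k * y₀ l) * w p * w q := by
        intro w; rw [← hexQz]; exact hminz w
      have := eig_of_min
        (fun p q => ∑ i, ∑ j, ∑ k, ∑ l, A i j k l p q * x₀ i * x₀ j * y₀ k * y₀ l)
        hsymB lam z₀ hQ hm hz₀
      intro p
      rw [fmtz]
      exact this p
    have hlampos : 0 < lam :=
      heig lam x₀ y₀ z₀ ⟨hx₀, hy₀, hz₀, heigx, heigy, heigz⟩
    have hmin' : lam ≤ hexForm A ux uy uz := hminT ux uy uz hux huy huz
    rw [hxdec, hydec, hzdec, hex_smul_x, hex_smul_y, hex_smul_z]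
    have hpos : 0 < hexForm A ux uy uz := lt_of_lt_of_le hlampos hmin'
    positivity
end

section
/- Let A = (a_{ijkl}) ∈ T_{4,3} be paired symmetric. Then A is positive definite (i.e., A x²y² > 0 for all nonzero x, y ∈ ℝ³) if and only if every M-eigenvalue of A is positive. -/
open scoped BigOperators

/-- A fourth order three dimensional tensor. -/
abbrev Tensor4 := Fin 3 → Fin 3 → Fin 3 → Fin 3 → ℝ

/-- The biquadratic form `A x²y²`. -/
def biQuad (A : Tensor4) (x y : Fin 3 → ℝ) : ℝ :=
  ∑ i, ∑ j, ∑ k, ∑ l, A i j k l * x i * x j * y k * y l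

/-- `A` is paired symmetric. -/
def PairedSym4 (A : Tensor4) : Prop :=
  ∀ i j k l : Fin 3,
    A i j k l = A j i k l ∧ A i j k l = A i j l k ∧ A i j k l = A j i l k

/-- `lam` is an M-eigenvalue of `A` with eigenvectors `x, y`. -/
def MEig4 (A : Tensor4) (lam : ℝ) (x y : Fin 3 → ℝ) : Prop :=
  (∑ i, x i * x i) = 1 ∧ (∑ i, y i * y i) = 1 ∧
  (∀ i, (∑ j, ∑ k, ∑ l, A i j k l * x j * y k * y l) = lam * x i) ∧
  (∀ l, (∑ i, ∑ j, ∑ k, A i j k l * x i * x j * y k) = lam * y l)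

/-!
A pair of M-eigenvectors `x, y` with M-eigenvalue `λ` satisfies `A x²y² = λ`, so positive
definiteness forces `λ > 0`. Conversely, `A x²y²` attains its minimum `m` on the product of unit
spheres at some `(x₀, y₀)`. Then `x ↦ A x²y₀²` and `y ↦ A x₀²y²` are quadratic forms with
symmetric matrices (by paired symmetry) minimised on the unit sphere at `x₀` and `y₀`; a
variation along `x₀ + t v` shows that such a minimiser is an eigenvector with eigenvalue the
minimum. Hence `m` is an M-eigenvalue, so `m > 0`, and by bihomogeneity `A x²y² > 0` for all
nonzero `x, y`.
-/

open Matrix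

section UnitSphere

variable {ι : Type*} [Fintype ι]

-- On `ι → ℝ`, `Metric.sphere 0 1` is the sphere of the sup norm, not the Euclidean one.
def unitSphere (ι : Type*) [Fintype ι] : Set (ι → ℝ) := {x | x ⬝ᵥ x = 1}

@[simp]
lemma mem_unitSphere {x : ι → ℝ} : x ∈ unitSphere ι ↔ x ⬝ᵥ x = 1 := Iff.rfl

lemma dotProduct_self_nonneg (x : ι → ℝ) : 0 ≤ x ⬝ᵥ x :=
  Finset.sum_nonneg fun i _ => mul_self_nonneg (x i)

lemma isCompact_unitSphere : IsCompact (unitSphere ι) := by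
  have hclosed : IsClosed (unitSphere ι) :=
    isClosed_eq (by unfold dotProduct; fun_prop) continuous_const
  refine (isCompact_closedBall (0 : ι → ℝ) 1).of_isClosed_subset hclosed fun x hx => ?_
  rw [mem_closedBall_zero_iff, pi_norm_le_iff_of_nonneg zero_le_one]
  intro i
  rw [Real.norm_eq_abs, abs_le_one_iff_mul_self_le_one, ← mem_unitSphere.mp hx]
  exact Finset.single_le_sum (fun j _ => mul_self_nonneg (x j)) (Finset.mem_univ i)

lemma unitSphere_nonempty [Nonempty ι] : (unitSphere ι).Nonempty := by
  classical
  exact ⟨Pi.single (Classical.arbitrary ι) 1, by simp⟩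

lemma ne_zero_of_mem_unitSphere {x : ι → ℝ} (hx : x ∈ unitSphere ι) : x ≠ 0 := by
  rintro rfl
  simp at hx

lemma exists_smul_mem_unitSphere {x : ι → ℝ} (hx : x ≠ 0) : ∃ c : ℝ, c • x ∈ unitSphere ι := by
  have hpos : 0 < x ⬝ᵥ x :=
    (dotProduct_self_nonneg x).lt_of_ne' (dotProduct_self_eq_zero.not.mpr hx)
  refine ⟨(√(x ⬝ᵥ x))⁻¹, ?_⟩
  rw [mem_unitSphere, smul_dotProduct, dotProduct_smul, smul_smul, smul_eq_mul, ← sq, inv_pow,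
    Real.sq_sqrt hpos.le, inv_mul_cancel₀ hpos.ne']

lemma mul_dotProduct_self_le_of_forall_mem_unitSphere {M : Matrix ι ι ℝ} {m : ℝ}
    (h : ∀ x ∈ unitSphere ι, m ≤ x ⬝ᵥ M *ᵥ x) (x : ι → ℝ) : m * (x ⬝ᵥ x) ≤ x ⬝ᵥ M *ᵥ x := by
  rcases eq_or_ne x 0 with rfl | hx
  · simp
  obtain ⟨c, hc⟩ := exists_smul_mem_unitSphere hx
  have hmin := h _ hc
  rw [mem_unitSphere, smul_dotProduct, dotProduct_smul, smul_smul, smul_eq_mul] at hc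
  rw [mulVec_smul, smul_dotProduct, dotProduct_smul, smul_smul, smul_eq_mul] at hmin
  calc m * (x ⬝ᵥ x) ≤ c * c * (x ⬝ᵥ M *ᵥ x) * (x ⬝ᵥ x) :=
        mul_le_mul_of_nonneg_right hmin (dotProduct_self_nonneg x)
    _ = x ⬝ᵥ M *ᵥ x := by rw [mul_right_comm, hc, one_mul]

lemma mulVec_eq_smul_of_isMinOn {M : Matrix ι ι ℝ} (hM : M.IsSymm) {x₀ : ι → ℝ}
    (hx₀ : x₀ ∈ unitSphere ι) (hmin : IsMinOn (fun x => x ⬝ᵥ M *ᵥ x) (unitSphere ι) x₀) :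
    M *ᵥ x₀ = (x₀ ⬝ᵥ M *ᵥ x₀) • x₀ := by
  set m := x₀ ⬝ᵥ M *ᵥ x₀
  set v := M *ᵥ x₀ - m • x₀
  have hlower := mul_dotProduct_self_le_of_forall_mem_unitSphere (M := M) (m := m)
    fun x hx => isMinOn_iff.mp hmin x hx
  have hsymm : x₀ ⬝ᵥ M *ᵥ v = v ⬝ᵥ M *ᵥ x₀ := by
    conv_lhs => rw [dotProduct_mulVec, ← hM, vecMul_transpose]
    exact dotProduct_comm _ _
  have hv : v ⬝ᵥ M *ᵥ x₀ - m * (x₀ ⬝ᵥ v) = v ⬝ᵥ v := by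
    rw [dotProduct_comm x₀, ← smul_eq_mul, ← dotProduct_smul, ← dotProduct_sub]
  -- Along the line `x₀ + t v` the form minus `m ‖·‖²` is `2 t ‖v‖² + O(t²)` and stays `≥ 0`.
  have hline : ∀ t : ℝ,
      0 ≤ (v ⬝ᵥ M *ᵥ v - m * (v ⬝ᵥ v)) * (t * t) + 2 * (v ⬝ᵥ v) * t + 0 := by
    intro t
    have := hlower (x₀ + t • v)
    simp only [mulVec_add, mulVec_smul, dotProduct_add, add_dotProduct, dotProduct_smul,
      smul_dotProduct, smul_eq_mul, hsymm, dotProduct_comm v x₀, mem_unitSphere.mp hx₀] at this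
    linear_combination this + 2 * t * hv
  have hdiscr := discrim_le_zero hline
  rw [discrim] at hdiscr
  have hv0 : v ⬝ᵥ v = 0 := by nlinarith
  exact sub_eq_zero.mp (dotProduct_self_eq_zero.mp hv0)

end UnitSphere

section BiQuad

variable {A : Tensor4}

def rightContraction (A : Tensor4) (y : Fin 3 → ℝ) : Matrix (Fin 3) (Fin 3) ℝ :=
  Matrix.of fun i j => ∑ k, ∑ l, A i j k l * y k * y l

def leftContraction (A : Tensor4) (x : Fin 3 → ℝ) : Matrix (Fin 3) (Fin 3) ℝ :=
  Matrix.of fun k l => ∑ i, ∑ j, A i j k l * x i * x j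

lemma isSymm_rightContraction (hA : PairedSym4 A) (y : Fin 3 → ℝ) :
    (rightContraction A y).IsSymm := by
  ext i j
  simp only [rightContraction, transpose_apply, of_apply, (hA j i _ _).1]

lemma isSymm_leftContraction (hA : PairedSym4 A) (x : Fin 3 → ℝ) :
    (leftContraction A x).IsSymm := by
  ext k l
  simp only [leftContraction, transpose_apply, of_apply, (hA _ _ l k).2.1]

lemma mulVec_rightContraction_apply (x y : Fin 3 → ℝ) (i : Fin 3) :
    (rightContraction A y *ᵥ x) i = ∑ j, ∑ k, ∑ l, A i j k l * x j * y k * y l := by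
  simp only [rightContraction, mulVec, dotProduct, of_apply, Finset.sum_mul]
  exact Finset.sum_congr rfl fun j _ => Finset.sum_congr rfl fun k _ =>
    Finset.sum_congr rfl fun l _ => by ring

lemma mulVec_leftContraction_apply (hA : PairedSym4 A) (x y : Fin 3 → ℝ) (l : Fin 3) :
    (leftContraction A x *ᵥ y) l = ∑ i, ∑ j, ∑ k, A i j k l * x i * x j * y k := by
  simp only [leftContraction, mulVec, dotProduct, of_apply, Finset.sum_mul]
  rw [Finset.sum_comm]
  refine Finset.sum_congr rfl fun i _ => ?_
  rw [Finset.sum_comm]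
  exact Finset.sum_congr rfl fun j _ => Finset.sum_congr rfl fun k _ => by rw [(hA i j k l).2.1]

lemma biQuad_eq_dotProduct_rightContraction (x y : Fin 3 → ℝ) :
    biQuad A x y = x ⬝ᵥ rightContraction A y *ᵥ x := by
  simp only [biQuad, rightContraction, mulVec, dotProduct, of_apply, Finset.mul_sum,
    Finset.sum_mul]
  exact Finset.sum_congr rfl fun i _ => Finset.sum_congr rfl fun j _ =>
    Finset.sum_congr rfl fun k _ => Finset.sum_congr rfl fun l _ => by ring

lemma biQuad_eq_dotProduct_leftContraction (x y : Fin 3 → ℝ) :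
    biQuad A x y = y ⬝ᵥ leftContraction A x *ᵥ y := by
  simp only [biQuad, leftContraction, mulVec, dotProduct, of_apply, Fin.sum_univ_three]
  ring

lemma biQuad_smul_smul (a b : ℝ) (x y : Fin 3 → ℝ) :
    biQuad A (a • x) (b • y) = a ^ 2 * b ^ 2 * biQuad A x y := by
  simp only [biQuad, Pi.smul_apply, smul_eq_mul, Finset.mul_sum]
  exact Finset.sum_congr rfl fun i _ => Finset.sum_congr rfl fun j _ =>
    Finset.sum_congr rfl fun k _ => Finset.sum_congr rfl fun l _ => by ring

lemma continuous_biQuad (A : Tensor4) :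
    Continuous fun p : (Fin 3 → ℝ) × (Fin 3 → ℝ) => biQuad A p.1 p.2 := by
  unfold biQuad; fun_prop

lemma MEig4.biQuad_eq {lam : ℝ} {x y : Fin 3 → ℝ} (h : MEig4 A lam x y) : biQuad A x y = lam := by
  obtain ⟨hx, -, hxeq, -⟩ := h
  have heig : rightContraction A y *ᵥ x = lam • x :=
    funext fun i => (mulVec_rightContraction_apply x y i).trans (hxeq i)
  rw [biQuad_eq_dotProduct_rightContraction, heig, dotProduct_smul, smul_eq_mul]
  exact (congrArg (lam * ·) hx).trans (mul_one lam)

lemma exists_isMinOn_biQuad (A : Tensor4) :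
    ∃ p ∈ unitSphere (Fin 3) ×ˢ unitSphere (Fin 3),
      IsMinOn (fun p => biQuad A p.1 p.2) (unitSphere (Fin 3) ×ˢ unitSphere (Fin 3)) p :=
  (isCompact_unitSphere.prod isCompact_unitSphere).exists_isMinOn
    (unitSphere_nonempty.prod unitSphere_nonempty) (continuous_biQuad A).continuousOn

lemma mEig4_of_isMinOn (hA : PairedSym4 A) {p : (Fin 3 → ℝ) × (Fin 3 → ℝ)}
    (hp : p ∈ unitSphere (Fin 3) ×ˢ unitSphere (Fin 3))
    (hmin : IsMinOn (fun p => biQuad A p.1 p.2) (unitSphere (Fin 3) ×ˢ unitSphere (Fin 3)) p) :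
    MEig4 A (biQuad A p.1 p.2) p.1 p.2 := by
  obtain ⟨x₀, y₀⟩ := p
  obtain ⟨hx₀, hy₀⟩ := hp
  have hminx : IsMinOn (fun x => x ⬝ᵥ rightContraction A y₀ *ᵥ x) (unitSphere (Fin 3)) x₀ :=
    isMinOn_iff.mpr fun x hx => by
      simpa only [biQuad_eq_dotProduct_rightContraction] using
        isMinOn_iff.mp hmin (x, y₀) ⟨hx, hy₀⟩
  have hminy : IsMinOn (fun y => y ⬝ᵥ leftContraction A x₀ *ᵥ y) (unitSphere (Fin 3)) y₀ :=
    isMinOn_iff.mpr fun y hy => by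
      simpa only [biQuad_eq_dotProduct_leftContraction] using
        isMinOn_iff.mp hmin (x₀, y) ⟨hx₀, hy⟩
  have hx := mulVec_eq_smul_of_isMinOn (isSymm_rightContraction hA y₀) hx₀ hminx
  have hy := mulVec_eq_smul_of_isMinOn (isSymm_leftContraction hA x₀) hy₀ hminy
  rw [← biQuad_eq_dotProduct_rightContraction] at hx
  rw [← biQuad_eq_dotProduct_leftContraction] at hy
  refine ⟨hx₀, hy₀, fun i => ?_, fun l => ?_⟩
  · rw [← mulVec_rightContraction_apply, hx, Pi.smul_apply, smul_eq_mul]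
  · rw [← mulVec_leftContraction_apply hA, hy, Pi.smul_apply, smul_eq_mul]

end BiQuad

theorem stmt_7 (A : Tensor4) (hA : PairedSym4 A) :
    (∀ x y : Fin 3 → ℝ, x ≠ 0 → y ≠ 0 → 0 < biQuad A x y) ↔
    (∀ (lam : ℝ) (x y : Fin 3 → ℝ), MEig4 A lam x y → 0 < lam) := by
  constructor
  · intro hpos lam x y hxy
    rw [← hxy.biQuad_eq]
    exact hpos x y (ne_zero_of_mem_unitSphere hxy.1) (ne_zero_of_mem_unitSphere hxy.2.1)
  · intro heig x y hx hy
    obtain ⟨p, hp, hmin⟩ := exists_isMinOn_biQuad A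
    obtain ⟨a, hax⟩ := exists_smul_mem_unitSphere hx
    obtain ⟨b, hby⟩ := exists_smul_mem_unitSphere hy
    have hscaled : 0 < a ^ 2 * b ^ 2 * biQuad A x y := by
      rw [← biQuad_smul_smul]
      exact (heig _ _ _ (mEig4_of_isMinOn hA hp hmin)).trans_le
        (isMinOn_iff.mp hmin (a • x, b • y) ⟨hax, hby⟩)
    exact pos_of_mul_pos_right hscaled (by positivity)
end

section
/- Let A = (a_{ijkl}) ∈ T_{4,3} be paired symmetric. For i,j ∈ {1,2,3} let A_{ij} denote the 3×3 matrix (a_{ijkl})_{k,l}, and for y ∈ ℝ³ let A(y) be the 3×3 matrix with (i,j) entry yᵀA_{ij}y = Σ_{k,l} a_{ijkl} y_k y_l. Then the biquadratic form A x²y² is positive definite if and only if: the matrix A_{11} is positive definite, and for every nonzero y ∈ ℝ³ both (yᵀA_{11}y)(yᵀA_{22}y) − (yᵀA_{12}y)(yᵀA_{21}y) > 0 and det(A(y)) > 0. -/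
/-!
For fixed `y`, the biquadratic form `A x²y²` is the quadratic form of the symmetric matrix `A(y)`
in `x`, so it is positive definite exactly when `A(y)` is positive definite for every `y ≠ 0`.
By Sylvester's criterion this means that the three leading principal minors of `A(y)` are positive.
The first of them is `yᵀ A₁₁ y`, and its positivity for all `y ≠ 0` is positive definiteness
of `A₁₁`.
-/

open scoped BigOperators
open scoped Matrix

/-- The matrix `A(y)` with `(i,j)` entry `yᵀ A_{ij} y = Σ_{k,l} a_{ijkl} y_k y_l`. -/
def Amat (A : Tensor4) (y : Fin 3 → ℝ) : Matrix (Fin 3) (Fin 3) ℝ :=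
  Matrix.of fun i j => ∑ k, ∑ l, A i j k l * y k * y l

/-- The block sub-matrix `A_{ij} = (a_{ijkl})_{k,l}`. -/
def subMat (A : Tensor4) (i j : Fin 3) : Matrix (Fin 3) (Fin 3) ℝ :=
  Matrix.of fun k l => A i j k l

namespace Matrix

/-- Completing the square twice (the `LDLᵀ` decomposition of `M`), scaled to avoid division. -/
theorem IsHermitian.mul_dotProduct_mulVec_eq_sum_sq_fin_three {M : Matrix (Fin 3) (Fin 3) ℝ}
    (hM : M.IsHermitian) (x : Fin 3 → ℝ) :
    M 0 0 * (M 0 0 * M 1 1 - M 0 1 * M 1 0) * (star x ⬝ᵥ (M *ᵥ x)) =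
      (M 0 0 * M 1 1 - M 0 1 * M 1 0) * (M 0 0 * x 0 + M 0 1 * x 1 + M 0 2 * x 2) ^ 2 +
        ((M 0 0 * M 1 1 - M 0 1 * M 1 0) * x 1 + (M 0 0 * M 1 2 - M 0 1 * M 0 2) * x 2) ^ 2 +
        M 0 0 * M.det * x 2 ^ 2 := by
  have h10 : M 1 0 = M 0 1 := by simpa using hM.apply 0 1
  have h20 : M 2 0 = M 0 2 := by simpa using hM.apply 0 2
  have h21 : M 2 1 = M 1 2 := by simpa using hM.apply 1 2
  simp only [det_fin_three, dotProduct, mulVec, Fin.sum_univ_three, star_trivial, h10, h20, h21]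
  ring

theorem IsHermitian.posDef_iff_fin_three {M : Matrix (Fin 3) (Fin 3) ℝ} (hM : M.IsHermitian) :
    M.PosDef ↔ 0 < M 0 0 ∧ 0 < M 0 0 * M 1 1 - M 0 1 * M 1 0 ∧ 0 < M.det := by
  refine ⟨fun hPD => ⟨hPD.diag_pos, ?_, hPD.det_pos⟩, fun ⟨ha, hminor, hdet⟩ => ?_⟩
  · have hminorPD := hPD.submatrix (Fin.castLE_injective (by norm_num : 2 ≤ 3))
    simpa [det_fin_two] using hminorPD.det_pos
  refine .of_dotProduct_mulVec_pos hM fun x hx => pos_of_mul_pos_right ?_ (mul_pos ha hminor).le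
  rw [hM.mul_dotProduct_mulVec_eq_sum_sq_fin_three]
  rcases ne_or_eq (x 2) 0 with hz | hz
  · positivity
  rcases ne_or_eq (x 1) 0 with hy | hy
  · simp only [hz, mul_zero, add_zero]
    positivity
  have hx0 : x 0 ≠ 0 := fun h0 => hx (funext fun i => by fin_cases i <;> assumption)
  simp only [hy, hz, mul_zero, add_zero]
  positivity

end Matrix

theorem biQuad_eq_dotProduct_mulVec_Amat (A : Tensor4) (x y : Fin 3 → ℝ) :
    biQuad A x y = star x ⬝ᵥ (Amat A y *ᵥ x) := by
  simp only [biQuad, Amat, dotProduct, Matrix.mulVec, Matrix.of_apply, Fin.sum_univ_three,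
    star_trivial]
  ring

theorem Amat_apply_eq_dotProduct_mulVec_subMat (A : Tensor4) (y : Fin 3 → ℝ) (i j : Fin 3) :
    Amat A y i j = star y ⬝ᵥ (subMat A i j *ᵥ y) := by
  simp only [Amat, subMat, dotProduct, Matrix.mulVec, Matrix.of_apply, Fin.sum_univ_three,
    star_trivial]
  ring

theorem isHermitian_Amat {A : Tensor4} (hA : PairedSym4 A) (y : Fin 3 → ℝ) :
    (Amat A y).IsHermitian :=
  Matrix.IsHermitian.ext fun i j => by simp [Amat, (hA j i _ _).1]

theorem isHermitian_subMat {A : Tensor4} (hA : PairedSym4 A) (i j : Fin 3) :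
    (subMat A i j).IsHermitian :=
  Matrix.IsHermitian.ext fun k l => by simp [subMat, (hA i j l k).2.1]

theorem biQuad_pos_iff_forall_posDef_Amat {A : Tensor4} (hA : PairedSym4 A) :
    (∀ x y : Fin 3 → ℝ, x ≠ 0 → y ≠ 0 → 0 < biQuad A x y) ↔
      ∀ y : Fin 3 → ℝ, y ≠ 0 → (Amat A y).PosDef := by
  simp only [Matrix.posDef_iff_dotProduct_mulVec, isHermitian_Amat hA,
    true_and, biQuad_eq_dotProduct_mulVec_Amat]
  exact ⟨fun h y hy x hx => h x y hx hy, fun h x y hx hy => h y hy hx⟩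

theorem posDef_subMat_iff {A : Tensor4} (hA : PairedSym4 A) (i : Fin 3) :
    (subMat A i i).PosDef ↔ ∀ y : Fin 3 → ℝ, y ≠ 0 → 0 < Amat A y i i := by
  simp only [Matrix.posDef_iff_dotProduct_mulVec, isHermitian_subMat hA, true_and,
    Amat_apply_eq_dotProduct_mulVec_subMat]

theorem stmt_9 (A : Tensor4) (hA : PairedSym4 A) :
    (∀ x y : Fin 3 → ℝ, x ≠ 0 → y ≠ 0 → 0 < biQuad A x y) ↔
    ((subMat A 0 0).PosDef ∧
      ∀ y : Fin 3 → ℝ, y ≠ 0 →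
        0 < (Amat A y 0 0) * (Amat A y 1 1) - (Amat A y 0 1) * (Amat A y 1 0) ∧
        0 < (Amat A y).det) := by
  simp only [biQuad_pos_iff_forall_posDef_Amat hA, posDef_subMat_iff hA,
    fun y => (isHermitian_Amat hA y).posDef_iff_fin_three, imp_and, forall_and]
end

section
/- Let A = (a_{ijkl}) ∈ T_{4,3} be paired symmetric. Then the biquadratic form A x²y² is a sum of squares of bilinear forms if and only if there exists a semi-paired symmetric tensor B = (b_{ijkl}) of A (i.e., b_{ijkl} = b_{jilk}, b_{ijlk} = b_{jikl}, b_{ijkl} + b_{jilk} + b_{ijlk} + b_{jikl} = 4 a_{ijkl} for all i,j,k,l) such that the 9×9 matrix M with entries M_{(i,k),(j,l)} := b_{ijkl}, indexed by pairs in {1,2,3}×{1,2,3}, is positive semidefinite. -/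
open scoped BigOperators

/-- The biquadratic form of `A` is a sum of squares of bilinear forms. -/
def SOSBilinear (A : Tensor4) : Prop :=
  ∃ (r : ℕ) (α : Fin r → Fin 3 → Fin 3 → ℝ),
    ∀ x y : Fin 3 → ℝ,
      biQuad A x y = ∑ s, (∑ i, ∑ j, α s i j * x i * y j) ^ 2

/-- The 9×9 unfolded matrix of `A`, with entry `M_{(i,k),(j,l)} = a_{ijkl}`. -/
def unfold4 (A : Tensor4) : Matrix (Fin 3 × Fin 3) (Fin 3 × Fin 3) ℝ :=
  Matrix.of fun p q => A p.1 q.1 p.2 q.2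

/-- `B` is a semi-paired symmetric tensor of `A`. -/
def SemiPaired (A B : Tensor4) : Prop :=
  ∀ i j k l : Fin 3,
    B i j k l = B j i l k ∧ B i j l k = B j i k l ∧
    B i j k l + B j i l k + B i j l k + B j i k l = 4 * A i j k l

/-!
An SOS decomposition `∑ₛ (∑ α_{s,ij} x_i y_j)²` is the biquadratic form of the Gram tensor
`b_{ijkl} = ∑ₛ α_{s,ik} α_{s,jl}`, whose unfolding `∑ₛ vec(α_s) vec(α_s)ᵀ` is positive
semidefinite; conversely a positive semidefinite matrix is a sum of such rank-one terms.
A Gram tensor satisfies `b_{ijkl} = b_{jilk}`, and its paired symmetrization has the same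
biquadratic form. A paired symmetric tensor is determined by its biquadratic form (polarize
once in `x` and once in `y`), so that symmetrization is `A`.
-/

open Finset Matrix

theorem eq_zero_of_forall_quadForm_eq_zero {ι : Type*} [Fintype ι] [DecidableEq ι]
    (M : ι → ι → ℝ) (hM : ∀ i j, M i j = M j i)
    (h : ∀ x : ι → ℝ, ∑ i, ∑ j, M i j * x i * x j = 0) : M = 0 := by
  have diag (i : ι) : M i i = 0 := by simpa [Pi.single_apply] using h (Pi.single i 1)
  funext i j
  have hij := h (Pi.single i 1 + Pi.single j 1)
  simp [Pi.single_apply, mul_add, sum_add_distrib, diag, hM j i] at hij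
  exact hij

theorem biQuad_eq_sum_quadForm (D : Tensor4) (x y : Fin 3 → ℝ) :
    biQuad D x y = ∑ i, ∑ j, (∑ k, ∑ l, D i j k l * y k * y l) * x i * x j := by
  simp only [biQuad, Fin.sum_univ_three]
  ring

theorem biQuad_sub (A B : Tensor4) (x y : Fin 3 → ℝ) :
    biQuad (A - B) x y = biQuad A x y - biQuad B x y := by
  simp only [biQuad, Pi.sub_apply, sub_mul, sum_sub_distrib]

theorem PairedSym4.sub {A B : Tensor4} (hA : PairedSym4 A) (hB : PairedSym4 B) :
    PairedSym4 (A - B) := by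
  intro i j k l
  obtain ⟨a₁, a₂, a₃⟩ := hA i j k l
  obtain ⟨b₁, b₂, b₃⟩ := hB i j k l
  exact ⟨congrArg₂ (· - ·) a₁ b₁, congrArg₂ (· - ·) a₂ b₂, congrArg₂ (· - ·) a₃ b₃⟩

theorem PairedSym4.eq_zero_of_biQuad_eq_zero {D : Tensor4} (hD : PairedSym4 D)
    (h : ∀ x y, biQuad D x y = 0) : D = 0 := by
  have inner_zero (y : Fin 3 → ℝ) : (fun i j => ∑ k, ∑ l, D i j k l * y k * y l) = 0 := by
    refine eq_zero_of_forall_quadForm_eq_zero _ (fun i j => ?_) fun x => ?_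
    · simp only [(hD i j _ _).1]
    · rw [← biQuad_eq_sum_quadForm, h]
  funext i j k l
  refine congrFun₂ (eq_zero_of_forall_quadForm_eq_zero (fun k l => D i j k l)
    (fun k l => (hD i j k l).2.1) fun y => ?_) k l
  exact congrFun₂ (inner_zero y) i j

theorem PairedSym4.eq_of_biQuad_eq {A B : Tensor4} (hA : PairedSym4 A) (hB : PairedSym4 B)
    (h : ∀ x y, biQuad A x y = biQuad B x y) : A = B := by
  refine sub_eq_zero.mp ((hA.sub hB).eq_zero_of_biQuad_eq_zero fun x y => ?_)
  rw [biQuad_sub, h, sub_self]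

noncomputable def pairSymm (B : Tensor4) : Tensor4 :=
  fun i j k l => (B i j k l + B j i l k + B i j l k + B j i k l) / 4

theorem pairedSym4_pairSymm (B : Tensor4) : PairedSym4 (pairSymm B) :=
  fun i j k l => ⟨by unfold pairSymm; ring, by unfold pairSymm; ring, by unfold pairSymm; ring⟩

theorem biQuad_pairSymm (B : Tensor4) (x y : Fin 3 → ℝ) :
    biQuad (pairSymm B) x y = biQuad B x y := by
  simp only [biQuad, pairSymm, Fin.sum_univ_three]
  ring

theorem SemiPaired.eq_pairSymm {A B : Tensor4} (h : SemiPaired A B) : A = pairSymm B := by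
  funext i j k l
  have := (h i j k l).2.2
  unfold pairSymm
  linarith

theorem semiPaired_pairSymm {B : Tensor4} (hB : ∀ i j k l, B i j k l = B j i l k) :
    SemiPaired (pairSymm B) B :=
  fun i j k l => ⟨hB i j k l, hB i j l k, by unfold pairSymm; ring⟩

def gramTensor {ι : Type*} [Fintype ι] (α : ι → Fin 3 → Fin 3 → ℝ) : Tensor4 :=
  fun i j k l => ∑ s, α s i k * α s j l

section gramTensor

variable {ι : Type*} [Fintype ι] (α : ι → Fin 3 → Fin 3 → ℝ)

theorem gramTensor_swap (i j k l : Fin 3) : gramTensor α i j k l = gramTensor α j i l k := by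
  simp only [gramTensor, mul_comm]

theorem biQuad_gramTensor (x y : Fin 3 → ℝ) :
    biQuad (gramTensor α) x y = ∑ s, (∑ i, ∑ j, α s i j * x i * y j) ^ 2 := by
  simp only [biQuad, gramTensor, Fin.sum_univ_three, sum_mul, ← sum_add_distrib]
  refine sum_congr rfl fun s _ => ?_
  ring

theorem unfold4_gramTensor :
    unfold4 (gramTensor α) = ∑ s, vecMulVec (fun p => α s p.1 p.2) (fun p => α s p.1 p.2) := by
  ext p q
  simp [unfold4, gramTensor, vecMulVec_apply, Matrix.sum_apply]

end gramTensor

theorem posSemidef_unfold4_iff (B : Tensor4) :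
    (unfold4 B).PosSemidef ↔ ∃ (r : ℕ) (α : Fin r → Fin 3 → Fin 3 → ℝ), B = gramTensor α := by
  rw [posSemidef_iff_eq_sum_vecMulVec]
  constructor
  · rintro ⟨r, v, hv⟩
    refine ⟨r, fun s i k => v s (i, k), ?_⟩
    funext i j k l
    simpa [unfold4, gramTensor, vecMulVec_apply, Matrix.sum_apply]
      using congrFun₂ hv (i, k) (j, l)
  · rintro ⟨r, α, rfl⟩
    exact ⟨r, _, unfold4_gramTensor α⟩

theorem stmt_15 (A : Tensor4) (hA : PairedSym4 A) :
    SOSBilinear A ↔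
    ∃ B : Tensor4, SemiPaired A B ∧ (unfold4 B).PosSemidef := by
  constructor
  · rintro ⟨r, α, hα⟩
    have hAB : A = pairSymm (gramTensor α) := hA.eq_of_biQuad_eq (pairedSym4_pairSymm _)
      fun x y => by rw [hα, biQuad_pairSymm, biQuad_gramTensor]
    exact ⟨gramTensor α, hAB ▸ semiPaired_pairSymm (gramTensor_swap α),
      (posSemidef_unfold4_iff _).mpr ⟨r, α, rfl⟩⟩
  · rintro ⟨B, hAB, hB⟩
    obtain ⟨r, α, rfl⟩ := (posSemidef_unfold4_iff B).mp hB
    exact ⟨r, α, fun x y => by rw [hAB.eq_pairSymm, biQuad_pairSymm, biQuad_gramTensor]⟩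
end
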